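/- For a multisegment Δ and integer i, define the i-hat signature: list Δ in left order; write − for each segment with first coordinate i, + for each segment with first coordinate i+1, blank otherwise; cancel +− pairs (note: reversed orientation), leaving −⋯−+⋯+. Define Ê_i(Δ) by replacing the segment (i, z) of the rightmost uncanceled − by (i+1, z) (with (i+1, z) deleted if i+1 > z, i.e., if z = i). Then, when nonzero, Ê_i(Δ) is a multisegment with n(Ê_i(Δ)) = n(Δ) − 1. -/

import Mathlib

/-- Weak left order on segments: `s ⪰ t` iff `s.2 > t.2`, or `s.2 = t.2` and `t.1 ≥ s.1`. -/
def lGE (s t : ℤ × ℤ) : Prop := t.2 < s.2 ∨ (s.2 = t.2 ∧ s.1 ≤ t.1)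

/-- `n(Δ)`: the total number of boxes of a multisegment. -/
def nOf (Δ : List (ℤ × ℤ)) : ℤ := (Δ.map (fun s => s.2 - s.1 + 1)).sum

/-- Reduction of the `i`-hat signature of a list of segments (in left order): a segment
with first coordinate `i` is a `-`, one with first coordinate `i+1` is a `+`, all others
are blank; adjacent `+-` pairs cancel, leaving `- ⋯ - + ⋯ +`. -/
def redSegHat (i : ℤ) : List (ℤ × ℤ) → List (ℤ × ℤ)
  | [] => []
  | s :: xs =>
    let r := redSegHat i xs
    if s.1 = i + 1 then
      match r with
      | t :: r' => if t.1 = i then r' else s :: r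
      | [] => [s]
    else if s.1 = i then s :: r
    else r

/-- `Ê_i` on a multisegment listed in left order: replace the segment `(i, z)` carrying
the rightmost uncanceled `-` by `(i+1, z)` (deleting it if `z = i`), or `none` if there
is no uncanceled `-`. -/
def EjHat (i : ℤ) (Δ : List (ℤ × ℤ)) : Option (List (ℤ × ℤ)) :=
  match ((redSegHat i Δ).filter (fun s => s.1 == i)).getLast? with
  | none => none
  | some s => some ((Δ.erase s) ++ (if i + 1 ≤ s.2 then [(i + 1, s.2)] else []))

/-! The segment `(i, z)` chosen by `Ê_i` survives the +− cancellation, so it is a genuine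
segment of `Δ`; replacing it by `(i+1, z)` (or deleting it when `z = i`) removes exactly its
first box. -/

theorem redSegHat_sublist (i : ℤ) (Δ : List (ℤ × ℤ)) : (redSegHat i Δ).Sublist Δ := by
  induction Δ with
  | nil => simp [redSegHat]
  | cons s xs ih =>
    unfold redSegHat
    dsimp only
    split_ifs
    · rcases hr : redSegHat i xs with _ | ⟨t, r'⟩
      · simp
      · rw [hr] at ih
        change (if t.1 = i then r' else s :: t :: r').Sublist (s :: xs)
        split_ifs
        · exact ((List.sublist_cons_self t r').trans ih).cons s
        · exact ih.cons_cons s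
    · exact ih.cons_cons s
    · exact ih.cons s

theorem nOf_append (Δ Γ : List (ℤ × ℤ)) : nOf (Δ ++ Γ) = nOf Δ + nOf Γ := by
  simp [nOf]

theorem nOf_erase {Δ : List (ℤ × ℤ)} {s : ℤ × ℤ} (hs : s ∈ Δ) :
    nOf (Δ.erase s) = nOf Δ - (s.2 - s.1 + 1) := by
  have := ((List.perm_cons_erase hs).map (fun s : ℤ × ℤ => s.2 - s.1 + 1)).sum_eq
  rw [List.map_cons, List.sum_cons] at this
  rw [nOf, nOf, this]
  ring

theorem exists_of_EjHat_eq_some {i : ℤ} {Δ Δ' : List (ℤ × ℤ)} (h : EjHat i Δ = some Δ') :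
    ∃ s ∈ Δ, s.1 = i ∧ Δ' = Δ.erase s ++ (if i + 1 ≤ s.2 then [(i + 1, s.2)] else []) := by
  unfold EjHat at h
  rcases hlast : ((redSegHat i Δ).filter (fun s => s.1 == i)).getLast? with _ | s
  · simp [hlast] at h
  · simp only [hlast, Option.some.injEq] at h
    obtain ⟨hred, hsi⟩ := List.mem_filter.mp (List.mem_of_getLast? hlast)
    exact ⟨s, (redSegHat_sublist i Δ).mem hred, by simpa using hsi, h.symm⟩

theorem stmt17_general (i : ℤ) (Δ : List (ℤ × ℤ)) (hseg : ∀ s ∈ Δ, s.1 ≤ s.2)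
    (Δ' : List (ℤ × ℤ)) (h : EjHat i Δ = some Δ') :
    (∀ s ∈ Δ', s.1 ≤ s.2) ∧ nOf Δ' = nOf Δ - 1 := by
  obtain ⟨s, hs, rfl, rfl⟩ := exists_of_EjHat_eq_some h
  have hs_seg := hseg s hs
  constructor
  · intro t ht
    rcases List.mem_append.mp ht with ht | ht
    · exact hseg t (List.mem_of_mem_erase ht)
    · split_ifs at ht with hz
      · simp_all
      · simp at ht
  · rw [nOf_append, nOf_erase hs]
    split_ifs with hz
    · simp only [nOf, List.map_singleton, List.sum_singleton]
      ring
    · simp only [nOf, List.map_nil, List.sum_nil]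
      omega

/-- When nonzero, `Ê_i Δ` is again a multisegment, and `n(Ê_i Δ) = n(Δ) - 1`. -/
theorem stmt17 (i : ℤ) (Δ : List (ℤ × ℤ)) (hseg : ∀ s ∈ Δ, s.1 ≤ s.2)
    (hsort : Δ.Pairwise lGE) (Δ' : List (ℤ × ℤ)) (h : EjHat i Δ = some Δ') :
    (∀ s ∈ Δ', s.1 ≤ s.2) ∧ nOf Δ' = nOf Δ - 1 :=
  stmt17_general i Δ hseg Δ' h
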